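/- The set of (p,q,r,s) ∈ ℝ⁴ satisfying p/3 − q = r/3 − s, −p + 5q + 3p² + 2pq − q² = −r + 5s + 3r² + 2rs − s², p² + q² = 1, r² + s² = 1 and (p,q) ≠ (r,s) is exactly the two-element set consisting of ( (−3√15 − 5)/20, (3 − √(3/5))/4, (3√15 − 5)/20, (√15 + 15)/20 ) and its swap ( (3√15 − 5)/20, (√15 + 15)/20, (−3√15 − 5)/20, (3 − √(3/5))/4 ). Moreover, with X(x,y) = (−1, −1/3) and Y(x,y) = (5 + 2x − 2y, 1 − 6x − 2y), both unit-circle points occurring in these solutions satisfy the crossing condition ⟨X(u), u⟩ · ⟨Y(u), u⟩ > 0. -/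
import Mathlib


/-- The closing-equation system for `X = (-1, -1/3)`, `Y = (5 + 2x - 2y, 1 - 6x - 2y)`. -/
def closingSys9 (p q r s : ℝ) : Prop :=
  p / 3 - q = r / 3 - s ∧
    -p + 5 * q + 3 * p ^ 2 + 2 * p * q - q ^ 2 =
      -r + 5 * s + 3 * r ^ 2 + 2 * r * s - s ^ 2 ∧
    p ^ 2 + q ^ 2 = 1 ∧ r ^ 2 + s ^ 2 = 1 ∧ (p, q) ≠ (r, s)

/-- The inner vector field `X(x,y) = (-1, -1/3)`. -/
noncomputable def X9 (_ : ℝ × ℝ) : ℝ × ℝ := (-1, -1/3)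

/-- The outer vector field `Y(x,y) = (5 + 2x - 2y, 1 - 6x - 2y)`. -/
def Y9 (u : ℝ × ℝ) : ℝ × ℝ := (5 + 2 * u.1 - 2 * u.2, 1 - 6 * u.1 - 2 * u.2)

/-- The crossing condition `⟨X(u), u⟩ ⬝ ⟨Y(u), u⟩ > 0` at `u`. -/
def crossing9 (u : ℝ × ℝ) : Prop :=
  ((X9 u).1 * u.1 + (X9 u).2 * u.2) * ((Y9 u).1 * u.1 + (Y9 u).2 * u.2) > 0

/-- The first intersection point. -/
noncomputable def u9 : ℝ × ℝ :=
  ((-3 * Real.sqrt 15 - 5) / 20, (3 - Real.sqrt (3 / 5)) / 4)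

/-- The second intersection point. -/
noncomputable def v9 : ℝ × ℝ :=
  ((3 * Real.sqrt 15 - 5) / 20, (Real.sqrt 15 + 15) / 20)

lemma sqrt15_sq : Real.sqrt 15 ^ 2 = 15 := Real.sq_sqrt (by norm_num)

lemma sqrt35_eq : Real.sqrt (3 / 5) = Real.sqrt 15 / 5 := by
  have h : ((Real.sqrt 15 / 5) ^ 2 : ℝ) = 3 / 5 := by
    rw [div_pow, sqrt15_sq]; norm_num
  rw [← h, Real.sqrt_sq (by positivity)]

lemma sqrt15_lt : Real.sqrt 15 < 4 := by
  nlinarith [sqrt15_sq, Real.sqrt_nonneg 15]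

lemma sqrt15_gt : (1 : ℝ) < Real.sqrt 15 := by
  nlinarith [sqrt15_sq, Real.sqrt_nonneg 15]

/-- The solution set of the closing equations is exactly the listed solution and its swap,
and both unit-circle intersection points satisfy the crossing condition. -/
theorem closingSys9_solutions_and_crossing :
    {x : ℝ × ℝ × ℝ × ℝ | closingSys9 x.1 x.2.1 x.2.2.1 x.2.2.2} =
      {(u9.1, u9.2, v9.1, v9.2), (v9.1, v9.2, u9.1, u9.2)} ∧
    crossing9 u9 ∧ crossing9 v9 := by
  have ht : Real.sqrt 15 ^ 2 = 15 := sqrt15_sq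
  have ht0 : (1:ℝ) < Real.sqrt 15 := sqrt15_gt
  have ht4 : Real.sqrt 15 < 4 := sqrt15_lt
  set t := Real.sqrt 15 with htdef
  refine ⟨?_, ?_, ?_⟩
  · ext ⟨p, q, r, s⟩
    simp only [Set.mem_setOf_eq, Set.mem_insert_iff, Set.mem_singleton_iff, closingSys9,
      u9, v9, sqrt35_eq, Prod.mk.injEq, ← htdef]
    constructor
    · rintro ⟨h1, h2, h3, h4, h5⟩
      have hne : q - s ≠ 0 := by
        intro h
        exact h5 (by rw [show p = r by linarith, show q = s by linarith])
      have e1 : (q - s) * (3 * (p + r) + (q + s)) = 0 := by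
        linear_combination h3 - h4 - 3 * (p + r) * h1
      have hB : q + s = -3 * (p + r) := by
        rcases mul_eq_zero.1 e1 with h | h
        · exact absurd h hne
        · linarith
      have e2 : (q - s) * (2 + 10 * (p + r) + 2 * (q + s)) = 0 := by
        linear_combination h2 + 3 * (1 - 3 * (p + r) - (q + s)) * h1
      have hA : p + r = -1/2 := by
        rcases mul_eq_zero.1 e2 with h | h
        · exact absurd h hne
        · linarith
      have hB2 : q + s = 3/2 := by linarith
      have hpr : p - r = 3 * (q - s) := by linarith
      have hp : p = (6 * (q - s) - 1) / 4 := by linarith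
      have hq : q = (3 + 2 * (q - s)) / 4 := by linarith
      have hd : (q - s) ^ 2 = 3 / 20 := by
        linear_combination (2/5) * h3 - (2/5) * (p + (6 * (q - s) - 1) / 4) * hp -
          (2/5) * (q + (3 + 2 * (q - s)) / 4) * hq
      have hfac : (q - s - t / 10) * (q - s + t / 10) = 0 := by
        linear_combination hd - (1/100) * ht
      rcases mul_eq_zero.1 hfac with h | h
      · -- q - s = t/10 : second alternative
        right
        refine ⟨by linarith, by linarith, by linarith, by linarith⟩
      · -- q - s = -t/10 : first alternative
        left
        refine ⟨by linarith, by linarith, by linarith, by linarith⟩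
    · have hne1 : ((-3 * t - 5) / 20, (3 - t / 5) / 4) ≠ ((3 * t - 5) / 20, (t + 15) / 20) := by
        intro h
        have := (Prod.mk.injEq _ _ _ _ ▸ h).1
        nlinarith [this]
      rintro (⟨hp, hq, hr, hs⟩ | ⟨hp, hq, hr, hs⟩) <;> subst hp <;> subst hq <;>
        subst hr <;> subst hs
      · exact ⟨by ring, by ring, by linear_combination (1/40) * ht,
          by linear_combination (1/40) * ht, hne1⟩
      · exact ⟨by ring, by ring, by linear_combination (1/40) * ht,
          by linear_combination (1/40) * ht, hne1.symm⟩
  · show crossing9 u9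
    simp only [crossing9, X9, Y9, u9, sqrt35_eq, ← htdef]
    nlinarith [ht, ht0, ht4]
  · show crossing9 v9
    simp only [crossing9, X9, Y9, v9, ← htdef]
    nlinarith [ht, ht0, ht4]
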